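/- arXiv:1601.03353 — 2 statements merged into one kernel-verified Lean document; each statement's English description precedes it below -/
import Mathlib

section
/- Let φ ∈ A(𝔻) be a symbol mapping 𝔻̄ into 𝔻̄ whose iterates φ^n converge to a point z₀ ∈ ∂𝔻 uniformly on the compact subsets of 𝔻 (φ has a boundary Denjoy–Wolff point z₀). Then the following are equivalent: (i) the composition operator C_φ : A(𝔻) → A(𝔻) is mean ergodic; (ii) for every z ∈ ∂𝔻 and every neighborhood U of z₀, the set ℕ_U^{z,φ} = {n ∈ ℕ : φ^n(z) ∈ U} has density dens ℕ_U^{z,φ} = 1; (iii) lim_{n→∞} (1/n) Σ_{m=1}^n (φ^m(z))^j = z₀^j for every z ∈ 𝔻̄ and every positive integer j. -/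
open Metric Set Filter Complex
open scoped Topology Classical

noncomputable section

/-- Membership in the disc algebra `A(𝔻)`: continuous on the closed unit disc and
holomorphic on the open unit disc. -/
def IsDiscAlg (f : ℂ → ℂ) : Prop :=
  ContinuousOn f (closedBall (0:ℂ) 1) ∧ DifferentiableOn ℂ f (ball (0:ℂ) 1)

/-- Membership in `H^∞(𝔻)`: bounded and holomorphic on the open unit disc. -/
def IsHInf (f : ℂ → ℂ) : Prop :=
  DifferentiableOn ℂ f (ball (0:ℂ) 1) ∧ ∃ M : ℝ, ∀ z ∈ ball (0:ℂ) 1, ‖f z‖ ≤ M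

/-- The Cesàro means `(C_φ)_[n] f = (1/n) ∑_{m=1}^n f ∘ φ^m` of the composition
operator `C_φ f = f ∘ φ`. -/
def cesaro (φ f : ℂ → ℂ) (n : ℕ) (z : ℂ) : ℂ :=
  (n : ℂ)⁻¹ * ∑ m ∈ Finset.Icc 1 n, f (φ^[m] z)

/-- `C_φ` is mean ergodic on `A(𝔻)`: for each `f ∈ A(𝔻)` the Cesàro means converge
in the sup norm on the closed disc. -/
def MeanErgodicDiscAlg (φ : ℂ → ℂ) : Prop :=
  ∀ f : ℂ → ℂ, IsDiscAlg f →
    ∃ g : ℂ → ℂ, TendstoUniformlyOn (cesaro φ f) g atTop (closedBall (0:ℂ) 1)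

/-- `C_φ` is uniformly mean ergodic on `A(𝔻)`: the Cesàro means converge in operator
norm, i.e. uniformly over the unit ball of `A(𝔻)`. -/
def UnifMeanErgodicDiscAlg (φ : ℂ → ℂ) : Prop :=
  ∃ P : (ℂ → ℂ) → ℂ → ℂ, ∀ ε > (0:ℝ), ∃ N : ℕ, ∀ n ≥ N,
    ∀ f : ℂ → ℂ, IsDiscAlg f → (∀ z ∈ closedBall (0:ℂ) 1, ‖f z‖ ≤ 1) →
      ∀ z ∈ closedBall (0:ℂ) 1, ‖cesaro φ f n z - P f z‖ ≤ ε

/-- `C_φ` is mean ergodic on `H^∞(𝔻)`: for each `f ∈ H^∞(𝔻)` the Cesàro means converge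
in the sup norm on the open disc. -/
def MeanErgodicHInf (φ : ℂ → ℂ) : Prop :=
  ∀ f : ℂ → ℂ, IsHInf f →
    ∃ g : ℂ → ℂ, TendstoUniformlyOn (cesaro φ f) g atTop (ball (0:ℂ) 1)

/-- `C_φ` is uniformly mean ergodic on `H^∞(𝔻)`: the Cesàro means converge in operator
norm, i.e. uniformly over the unit ball of `H^∞(𝔻)`. -/
def UnifMeanErgodicHInf (φ : ℂ → ℂ) : Prop :=
  ∃ P : (ℂ → ℂ) → ℂ → ℂ, ∀ ε > (0:ℝ), ∃ N : ℕ, ∀ n ≥ N,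
    ∀ f : ℂ → ℂ, IsHInf f → (∀ z ∈ ball (0:ℂ) 1, ‖f z‖ ≤ 1) →
      ∀ z ∈ ball (0:ℂ) 1, ‖cesaro φ f n z - P f z‖ ≤ ε

/-- `φ` is an automorphism (biholomorphic self-map) of the open unit disc. -/
def IsDiscAutomorphism (φ : ℂ → ℂ) : Prop :=
  DifferentiableOn ℂ φ (ball (0:ℂ) 1) ∧ MapsTo φ (ball (0:ℂ) 1) (ball (0:ℂ) 1) ∧
  ∃ ψ : ℂ → ℂ, DifferentiableOn ℂ ψ (ball (0:ℂ) 1) ∧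
    MapsTo ψ (ball (0:ℂ) 1) (ball (0:ℂ) 1) ∧
    (∀ z ∈ ball (0:ℂ) 1, ψ (φ z) = z) ∧ ∀ z ∈ ball (0:ℂ) 1, φ (ψ z) = z

/-- An elliptic automorphism of the disc: an automorphism with a fixed point in `𝔻`. -/
def IsEllipticAutomorphism (φ : ℂ → ℂ) : Prop :=
  IsDiscAutomorphism φ ∧ ∃ z ∈ ball (0:ℂ) 1, φ z = z

/-- A hyperbolic automorphism of the disc: an automorphism with exactly two fixed
points, both on the unit circle. -/
def IsHyperbolicAutomorphism (φ : ℂ → ℂ) : Prop :=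
  IsDiscAutomorphism φ ∧ ∃ p q : ℂ, p ≠ q ∧ ‖p‖ = 1 ∧ ‖q‖ = 1 ∧ φ p = p ∧ φ q = q ∧
    ∀ z ∈ closedBall (0:ℂ) 1, φ z = z → z = p ∨ z = q

/-- A parabolic automorphism of the disc: an automorphism with exactly one fixed
point, lying on the unit circle. -/
def IsParabolicAutomorphism (φ : ℂ → ℂ) : Prop :=
  IsDiscAutomorphism φ ∧ ∃ p : ℂ, ‖p‖ = 1 ∧ φ p = p ∧
    ∀ z ∈ closedBall (0:ℂ) 1, φ z = z → z = p

/-- A set `J ⊆ ℕ` has density one: `#(J ∩ [0,N]) / N → 1` as `N → ∞`. -/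
def HasDensityOne (J : Set ℕ) : Prop :=
  Tendsto (fun N : ℕ => (((Finset.range (N + 1)).filter (fun n => n ∈ J)).card : ℝ) / N)
    atTop (𝓝 1)

/-- A typical weight on `𝔻`: continuous, strictly positive, bounded, radial,
non-increasing in `|z|`, and tending to `0` as `|z| → 1`. -/
def IsTypicalWeight (v : ℂ → ℝ) : Prop :=
  ContinuousOn v (ball (0:ℂ) 1) ∧ (∀ z ∈ ball (0:ℂ) 1, 0 < v z) ∧
  (∃ M : ℝ, ∀ z ∈ ball (0:ℂ) 1, v z ≤ M) ∧
  (∀ z ∈ ball (0:ℂ) 1, ∀ w ∈ ball (0:ℂ) 1, ‖z‖ = ‖w‖ → v z = v w) ∧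
  (∀ z ∈ ball (0:ℂ) 1, ∀ w ∈ ball (0:ℂ) 1, ‖z‖ ≤ ‖w‖ → v w ≤ v z) ∧
  (∀ ε > (0:ℝ), ∃ r : ℝ, r < 1 ∧ ∀ z ∈ ball (0:ℂ) 1, r ≤ ‖z‖ → v z < ε)

/-- Membership in the weighted space `H_v^∞`. -/
def IsHvInf (v : ℂ → ℝ) (f : ℂ → ℂ) : Prop :=
  DifferentiableOn ℂ f (ball (0:ℂ) 1) ∧ ∃ M : ℝ, ∀ z ∈ ball (0:ℂ) 1, v z * ‖f z‖ ≤ M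

/-- Membership in the weighted space `H_v^0`. -/
def IsHv0 (v : ℂ → ℝ) (f : ℂ → ℂ) : Prop :=
  IsHvInf v f ∧
  ∀ ε > (0:ℝ), ∃ r : ℝ, r < 1 ∧ ∀ z ∈ ball (0:ℂ) 1, r ≤ ‖z‖ → v z * ‖f z‖ < ε


/-!
For `‖z₀‖ = 1` the function `peakGap z₀ u = 1 - Re (conj z₀ * u)` is non-negative on the closed
disc, vanishes only at `z₀` and dominates `‖u - z₀‖ ^ 2 / 2`; being `ℝ`-affine, its Cesàro means
along a sequence are its values at the Cesàro means of the sequence. Hence the Cesàro means of a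
sequence in the closed disc tend to `z₀` iff the sequence tends to `z₀` in density; this gives
(ii) ⟺ (iii) with `j = 1`, the interior orbits being handled by the Denjoy–Wolff hypothesis.
If the orbit means tend to `z₀` everywhere, the means of `peakGap z₀` along orbits tend to `0`
uniformly on the compact closed disc, and `‖f u - f z₀‖ ≤ ε + C * peakGap z₀ u` then makes the
Cesàro means of every `f ∈ A(𝔻)` converge uniformly to `f z₀`. Conversely, a mean ergodic limit is
continuous on the closed disc and equals `f z₀` on the open disc, hence everywhere.
-/

section CesaroMean

variable {𝕜 : Type*} [RCLike 𝕜]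

def cesaroMean (a : ℕ → 𝕜) (n : ℕ) : 𝕜 :=
  (n : 𝕜)⁻¹ * ∑ m ∈ Finset.Icc 1 n, a m

theorem cesaro_eq_cesaroMean (φ f : ℂ → ℂ) (n : ℕ) (z : ℂ) :
    cesaro φ f n z = cesaroMean (fun m => f (φ^[m] z)) n := rfl

theorem Filter.Tendsto.cesaroMean {a : ℕ → 𝕜} {l : 𝕜} (h : Tendsto a atTop (𝓝 l)) :
    Tendsto (cesaroMean a) atTop (𝓝 l) := by
  refine ((h.comp (tendsto_add_atTop_nat 1)).cesaro_smul).congr fun n => ?_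
  rw [_root_.cesaroMean, ← Finset.Ico_add_one_right_eq_Icc, ← zero_add 1, ← Finset.sum_Ico_add',
    ← Finset.range_eq_Ico, RCLike.real_smul_eq_coe_mul]
  simp

theorem cesaroMean_mono {a b : ℕ → ℝ} (h : ∀ m, a m ≤ b m) (n : ℕ) :
    cesaroMean a n ≤ cesaroMean b n :=
  mul_le_mul_of_nonneg_left (Finset.sum_le_sum fun m _ => h m) (by positivity)

theorem cesaroMean_nonneg {a : ℕ → ℝ} (h : ∀ m, 0 ≤ a m) (n : ℕ) : 0 ≤ cesaroMean a n :=
  mul_nonneg (by positivity) (Finset.sum_nonneg fun m _ => h m)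

theorem cesaroMean_const_mul (a : ℕ → 𝕜) (c : 𝕜) (n : ℕ) :
    cesaroMean (fun m => c * a m) n = c * cesaroMean a n := by
  simp only [cesaroMean, ← Finset.mul_sum, mul_left_comm]

theorem cesaroMean_const_add {a : ℕ → 𝕜} {n : ℕ} (hn : n ≠ 0) (c : 𝕜) :
    cesaroMean (fun m => c + a m) n = c + cesaroMean a n := by
  have : (n : 𝕜) ≠ 0 := Nat.cast_ne_zero.mpr hn
  simp only [cesaroMean, Finset.sum_add_distrib, Finset.sum_const, Nat.card_Icc,
    add_tsub_cancel_right, nsmul_eq_mul]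
  field_simp

theorem norm_cesaroMean_le (a : ℕ → 𝕜) (n : ℕ) :
    ‖cesaroMean a n‖ ≤ cesaroMean (fun m => ‖a m‖) n := by
  simp only [cesaroMean, norm_mul, norm_inv, RCLike.norm_natCast]
  gcongr
  exact norm_sum_le _ _

theorem norm_cesaroMean_sub_le {a : ℕ → 𝕜} {b : ℕ → ℝ} {l : 𝕜} {c C : ℝ} {n : ℕ}
    (hn : n ≠ 0) (h : ∀ m, ‖a m - l‖ ≤ c + C * b m) :
    ‖cesaroMean a n - l‖ ≤ c + C * cesaroMean b n := by
  have hsub : cesaroMean a n - l = cesaroMean (fun m => -l + a m) n := by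
    rw [cesaroMean_const_add hn]; ring
  rw [hsub, ← cesaroMean_const_mul, ← cesaroMean_const_add hn]
  exact (norm_cesaroMean_le _ n).trans
    (cesaroMean_mono (fun m => by simpa only [neg_add_eq_sub] using h m) n)

end CesaroMean

def IsDensityZero (J : Set ℕ) : Prop :=
  Tendsto (cesaroMean (J.indicator (1 : ℕ → ℝ))) atTop (𝓝 0)

theorem IsDensityZero.mono {J J' : Set ℕ} (hJ : IsDensityZero J) (h : J' ⊆ J) :
    IsDensityZero J' :=
  squeeze_zero (cesaroMean_nonneg fun _ => Set.indicator_nonneg (fun _ _ => zero_le_one) _)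
    (cesaroMean_mono fun _ => Set.indicator_le_indicator_of_subset h (fun _ => zero_le_one) _) hJ

theorem card_filter_range_succ_eq (J : Set ℕ) (N : ℕ) :
    (((Finset.range (N + 1)).filter (fun n => n ∈ J)).card : ℝ) =
      J.indicator 1 0 + N - ∑ m ∈ Finset.Icc 1 N, Jᶜ.indicator (1 : ℕ → ℝ) m := by
  have hcard : (((Finset.range (N + 1)).filter (fun n => n ∈ J)).card : ℝ) =
      ∑ m ∈ Finset.range (N + 1), J.indicator 1 m := by
    rw [Finset.natCast_card_filter]
    simp only [Set.indicator_apply, Pi.one_apply]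
  rw [hcard, Finset.sum_range_succ', Finset.range_eq_Ico, Finset.sum_Ico_add', zero_add,
    Finset.Ico_add_one_right_eq_Icc, Set.indicator_compl]
  simp only [Pi.sub_apply, Pi.one_apply, Finset.sum_sub_distrib, Finset.sum_const,
    Nat.card_Icc, add_tsub_cancel_right, nsmul_eq_mul, mul_one]
  ring

theorem hasDensityOne_iff_isDensityZero_compl (J : Set ℕ) :
    HasDensityOne J ↔ IsDensityZero Jᶜ := by
  have hdiff : Tendsto (fun N : ℕ =>
      (((Finset.range (N + 1)).filter (fun n => n ∈ J)).card : ℝ) / N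
        - (1 - cesaroMean (Jᶜ.indicator 1) N)) atTop (𝓝 0) := by
    refine (tendsto_const_div_atTop_nhds_zero_nat (J.indicator 1 0)).congr' ?_
    filter_upwards [eventually_ne_atTop 0] with N hN
    have : (N : ℝ) ≠ 0 := Nat.cast_ne_zero.mpr hN
    rw [card_filter_range_succ_eq, cesaroMean]
    field_simp
    ring
  unfold HasDensityOne IsDensityZero
  constructor
  · intro h
    simpa using (tendsto_const_nhds (x := (1:ℝ))).sub (h.sub hdiff)
  · intro h
    simpa using ((tendsto_const_nhds (x := (1:ℝ))).sub h).add hdiff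

theorem tendsto_cesaroMean_of_hasDensityOne {𝕜 : Type*} [RCLike 𝕜] {a : ℕ → 𝕜} {l : 𝕜}
    {B : ℝ} (hB : ∀ m, ‖a m - l‖ ≤ B) (h : ∀ U ∈ 𝓝 l, HasDensityOne {m | a m ∈ U}) :
    Tendsto (cesaroMean a) atTop (𝓝 l) := by
  rw [Metric.tendsto_nhds]
  intro ε hε
  set J := {m | a m ∈ ball l (ε / 2)}ᶜ
  have hJ : IsDensityZero J :=
    (hasDensityOne_iff_isDensityZero_compl _).mp (h _ (ball_mem_nhds l (half_pos hε)))
  have hbound : ∀ m, ‖a m - l‖ ≤ ε / 2 + B * J.indicator 1 m := by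
    intro m
    by_cases hm : m ∈ J
    · simp only [Set.indicator_of_mem hm, Pi.one_apply, mul_one]
      linarith [hB m]
    · simp only [Set.indicator_of_notMem hm, mul_zero, add_zero]
      exact (mem_ball_iff_norm.mp (not_not.mp hm)).le
  have hsmall := (hJ.const_mul B).eventually
    (gt_mem_nhds (show B * 0 < ε / 2 by simpa using half_pos hε))
  filter_upwards [hsmall, eventually_ne_atTop 0] with n hn hn0
  rw [dist_eq_norm]
  linarith [norm_cesaroMean_sub_le hn0 hbound]

theorem isDensityZero_le_of_tendsto_cesaroMean {a : ℕ → ℝ} (h0 : ∀ m, 0 ≤ a m)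
    (h : Tendsto (cesaroMean a) atTop (𝓝 0)) {c : ℝ} (hc : 0 < c) :
    IsDensityZero {m | c ≤ a m} := by
  have hle : ∀ m, {m | c ≤ a m}.indicator (1 : ℕ → ℝ) m ≤ c⁻¹ * a m := by
    intro m
    by_cases hm : c ≤ a m
    · simp only [Set.indicator_of_mem (show m ∈ {m | c ≤ a m} from hm), Pi.one_apply]
      rwa [le_inv_mul_iff₀ hc, mul_one]
    · simp only [Set.indicator_of_notMem (show m ∉ {m | c ≤ a m} from hm)]
      exact mul_nonneg (inv_nonneg.mpr hc.le) (h0 m)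
  refine squeeze_zero (cesaroMean_nonneg fun _ => Set.indicator_nonneg
    (fun _ _ => zero_le_one) _) (fun n => (cesaroMean_mono hle n).trans_eq
    (cesaroMean_const_mul a c⁻¹ n)) ?_
  simpa using h.const_mul c⁻¹

section PeakGap

variable {z₀ : ℂ}

def peakGap (z₀ u : ℂ) : ℝ := 1 - (starRingEnd ℂ z₀ * u).re

theorem continuous_peakGap (z₀ : ℂ) : Continuous (peakGap z₀) := by
  unfold peakGap; fun_prop

theorem sq_norm_sub_le_two_mul_peakGap (hz₀ : ‖z₀‖ = 1) {u : ℂ} (hu : ‖u‖ ≤ 1) :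
    ‖u - z₀‖ ^ 2 ≤ 2 * peakGap z₀ u := by
  have hexp : ‖u - z₀‖ ^ 2 = ‖u‖ ^ 2 + ‖z₀‖ ^ 2 - 2 * (starRingEnd ℂ z₀ * u).re := by
    simp only [Complex.sq_norm, Complex.normSq_apply, Complex.sub_re, Complex.sub_im,
      Complex.mul_re, Complex.conj_re, Complex.conj_im]
    ring
  rw [hexp, hz₀, peakGap]
  nlinarith [norm_nonneg u]

theorem peakGap_nonneg (hz₀ : ‖z₀‖ = 1) {u : ℂ} (hu : ‖u‖ ≤ 1) : 0 ≤ peakGap z₀ u := by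
  nlinarith [sq_norm_sub_le_two_mul_peakGap hz₀ hu, sq_nonneg ‖u - z₀‖]

theorem peakGap_self (hz₀ : ‖z₀‖ = 1) : peakGap z₀ z₀ = 0 := by
  rw [peakGap, mul_comm, Complex.mul_conj, Complex.normSq_eq_norm_sq, hz₀]
  simp

theorem cesaroMean_peakGap (x : ℕ → ℂ) {n : ℕ} (hn : n ≠ 0) :
    cesaroMean (fun m => peakGap z₀ (x m)) n = peakGap z₀ (cesaroMean x n) := by
  have : (n : ℝ) ≠ 0 := Nat.cast_ne_zero.mpr hn
  simp only [cesaroMean, peakGap, Finset.sum_sub_distrib, Finset.sum_const, Nat.card_Icc,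
    add_tsub_cancel_right, nsmul_eq_mul, mul_left_comm _ (n : ℂ)⁻¹, ← Finset.mul_sum,
    ← Complex.re_sum]
  rw [← Complex.ofReal_natCast, ← Complex.ofReal_inv, Complex.re_ofReal_mul]
  field_simp

theorem tendsto_cesaroMean_peakGap (hz₀ : ‖z₀‖ = 1) {x : ℕ → ℂ}
    (h : Tendsto (cesaroMean x) atTop (𝓝 z₀)) :
    Tendsto (cesaroMean fun m => peakGap z₀ (x m)) atTop (𝓝 0) := by
  rw [← peakGap_self hz₀]
  refine ((continuous_peakGap z₀).tendsto z₀ |>.comp h).congr' ?_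
  filter_upwards [eventually_ne_atTop 0] with n hn
  exact (cesaroMean_peakGap x hn).symm

theorem tendsto_cesaroMean_iff_forall_hasDensityOne (hz₀ : ‖z₀‖ = 1) {x : ℕ → ℂ}
    (hx : ∀ m, ‖x m‖ ≤ 1) :
    Tendsto (cesaroMean x) atTop (𝓝 z₀) ↔ ∀ U ∈ 𝓝 z₀, HasDensityOne {m | x m ∈ U} := by
  refine ⟨fun h U hU => ?_, tendsto_cesaroMean_of_hasDensityOne (B := 1 + 1) fun m => ?_⟩
  · obtain ⟨δ, hδ, hδU⟩ := Metric.mem_nhds_iff.mp hU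
    refine (hasDensityOne_iff_isDensityZero_compl _).mpr <|
      (isDensityZero_le_of_tendsto_cesaroMean (fun m => peakGap_nonneg hz₀ (hx m))
        (tendsto_cesaroMean_peakGap hz₀ h) (by positivity : 0 < δ ^ 2 / 2)).mono fun m hm => ?_
    have hfar : δ ≤ ‖x m - z₀‖ := by
      by_contra! hlt
      exact hm (hδU (mem_ball_iff_norm.mpr hlt))
    have := sq_norm_sub_le_two_mul_peakGap hz₀ (hx m)
    show δ ^ 2 / 2 ≤ peakGap z₀ (x m)
    nlinarith
  · calc ‖x m - z₀‖ ≤ ‖x m‖ + ‖z₀‖ := norm_sub_le _ _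
      _ ≤ 1 + 1 := by rw [hz₀]; gcongr; exact hx m

theorem exists_norm_sub_le_add_mul_peakGap {E : Type*} [SeminormedAddCommGroup E]
    (hz₀ : ‖z₀‖ = 1) {f : ℂ → E} (hf : ContinuousOn f (closedBall 0 1)) {ε : ℝ}
    (hε : 0 < ε) :
    ∃ C, 0 ≤ C ∧ ∀ u ∈ closedBall (0 : ℂ) 1, ‖f u - f z₀‖ ≤ ε + C * peakGap z₀ u := by
  have hz₀D : z₀ ∈ closedBall (0 : ℂ) 1 := mem_closedBall_zero_iff.mpr hz₀.le
  obtain ⟨M, hM⟩ := (isCompact_closedBall (0 : ℂ) 1).exists_bound_of_continuousOn hf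
  obtain ⟨δ, hδ, hδf⟩ := Metric.continuousWithinAt_iff.mp (hf z₀ hz₀D) ε hε
  have hM0 : 0 ≤ M := (norm_nonneg _).trans (hM z₀ hz₀D)
  refine ⟨4 * M / δ ^ 2, by positivity, fun u hu => ?_⟩
  have hu1 : ‖u‖ ≤ 1 := mem_closedBall_zero_iff.mp hu
  have hgap := peakGap_nonneg hz₀ hu1
  by_cases hnear : dist u z₀ < δ
  · have := hδf hu hnear
    rw [dist_eq_norm] at this
    nlinarith [show 0 ≤ 4 * M / δ ^ 2 by positivity]
  · have hfar : δ ^ 2 ≤ 2 * peakGap z₀ u := by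
      rw [not_lt, dist_eq_norm] at hnear
      nlinarith [sq_norm_sub_le_two_mul_peakGap hz₀ hu1]
    calc ‖f u - f z₀‖ ≤ M + M := (norm_sub_le _ _).trans (add_le_add (hM u hu) (hM z₀ hz₀D))
      _ = 4 * M / δ ^ 2 * (δ ^ 2 / 2) := by field_simp; ring
      _ ≤ ε + 4 * M / δ ^ 2 * peakGap z₀ u := by
        nlinarith [show 0 ≤ 4 * M / δ ^ 2 by positivity]

end PeakGap

/-- Greedy covering: from `p`, jump over a window of length `t ≤ T` with sum `< c * t`; the final
stretch, shorter than `T`, contributes at most `B * T`. -/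
theorem sum_Ioc_le_of_forall_exists_sum_lt {a : ℕ → ℝ} {B c : ℝ} {n T : ℕ} (hB : 0 ≤ B)
    (hc : 0 ≤ c) (haB : ∀ m, a m ≤ B)
    (h : ∀ j, j + T ≤ n → ∃ t ≤ T, ∑ m ∈ Finset.Ioc j (j + t), a m < c * t) :
    ∀ p ≤ n, ∑ m ∈ Finset.Ioc p n, a m ≤ c * (n - p) + B * T := by
  intro p
  induction hk : n - p using Nat.strong_induction_on generalizing p with
  | _ k ih =>
  intro hp
  by_cases hpT : p + T ≤ n
  · obtain ⟨t, htT, ht⟩ := h p hpT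
    have ht0 : t ≠ 0 := by rintro rfl; simp at ht
    have hrest := ih (n - (p + t)) (by omega) (p + t) rfl (by omega)
    rw [← Finset.sum_Ioc_consecutive a (Nat.le_add_right p t) (by omega)]
    push_cast at hrest
    linarith
  · have hcard : ((n - p : ℕ) : ℝ) ≤ T := by exact_mod_cast (by omega : n - p ≤ T)
    calc ∑ m ∈ Finset.Ioc p n, a m ≤ ∑ m ∈ Finset.Ioc p n, B :=
          Finset.sum_le_sum fun m _ => haB m
      _ = B * (n - p : ℕ) := by rw [Finset.sum_const, Nat.card_Ioc, nsmul_eq_mul, mul_comm]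
      _ ≤ c * (n - p) + B * T := by
        have : (p : ℝ) ≤ n := by exact_mod_cast hp
        nlinarith

theorem exists_forall_le_sum_Ioc {a : ℕ → ℝ} {B c : ℝ} {n T : ℕ} (hB : 0 ≤ B) (hc : 0 ≤ c)
    (haB : ∀ m, a m ≤ B) (hsum : c * n + B * T < ∑ m ∈ Finset.Ioc 0 n, a m) :
    ∃ j, j + T ≤ n ∧ ∀ t ≤ T, c * t ≤ ∑ m ∈ Finset.Ioc j (j + t), a m := by
  by_contra! hno
  have := sum_Ioc_le_of_forall_exists_sum_lt hB hc haB hno 0 (Nat.zero_le n)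
  simp only [CharP.cast_eq_zero, sub_zero] at this
  linarith

theorem IsCompact.exists_forall_le_of_forall_exists {X : Type*} [TopologicalSpace X]
    {K : Set X} (hK : IsCompact K) {g : ℕ → X → ℝ} (hg : ∀ t, ContinuousOn (g t) K)
    {b : ℕ → ℝ} (h : ∀ N, ∃ y ∈ K, ∀ t ≤ N, b t ≤ g t y) : ∃ y ∈ K, ∀ t, b t ≤ g t y := by
  choose Y hYK hY using h
  obtain ⟨y, hyK, hy⟩ := hK.exists_mapClusterPt (f := atTop) (tendsto_principal.mpr
    (Eventually.of_forall hYK))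
  refine ⟨y, hyK, fun t => ?_⟩
  by_contra! hlt
  have hnear : ∀ᶠ x in 𝓝 y, x ∈ K → g t x < b t :=
    eventually_nhdsWithin_iff.mp ((hg t y hyK).eventually (gt_mem_nhds hlt))
  obtain ⟨N, hN, htN⟩ := ((hy.frequently hnear).and_eventually (eventually_ge_atTop t)).exists
  exact (hN (hYK N)).not_ge (hY N t htN)

theorem sum_Ioc_eq_sum_Icc_add {M : Type*} [AddCommMonoid M] (a : ℕ → M) (j t : ℕ) :
    ∑ m ∈ Finset.Ioc j (j + t), a m = ∑ m ∈ Finset.Icc 1 t, a (m + j) := by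
  rw [← Finset.Icc_add_one_left_eq_Ioc, add_comm j 1, add_comm j t,
    ← Finset.map_add_right_Icc, Finset.sum_map]
  rfl

/-- If uniformity failed, long orbit segments with mean `≥ ε` would contain, by
`exists_forall_le_sum_Ioc`, starting points whose averages stay `≥ ε / 2` up to any prescribed time;
a cluster point of these would have averages `≥ ε / 2` forever. -/
theorem tendstoUniformlyOn_cesaroMean_of_tendsto_zero {X : Type*} [TopologicalSpace X]
    {K : Set X} (hK : IsCompact K) {T : X → X} (hTK : MapsTo T K K) (hT : ContinuousOn T K)
    {w : X → ℝ} (hw : ContinuousOn w K) (hw0 : ∀ x ∈ K, 0 ≤ w x)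
    (h : ∀ x ∈ K, Tendsto (cesaroMean fun m => w (T^[m] x)) atTop (𝓝 0)) :
    TendstoUniformlyOn (fun n x => cesaroMean (fun m => w (T^[m] x)) n) (fun _ => 0) atTop K := by
  obtain ⟨B₀, hB₀⟩ := hK.exists_bound_of_continuousOn hw
  set B := max B₀ 0
  have hwB : ∀ x ∈ K, ∀ m, w (T^[m] x) ≤ B := fun x hx m =>
    ((le_abs_self _).trans (hB₀ _ (hTK.iterate m hx))).trans (le_max_left _ _)
  rw [Metric.tendstoUniformlyOn_iff]
  by_contra! hfreq
  obtain ⟨ε, hε, hfreq⟩ := hfreq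
  have hwindows : ∀ N : ℕ, ∃ y ∈ K, ∀ t ≤ N, ε / 2 * t ≤ ∑ m ∈ Finset.Icc 1 t, w (T^[m] y) := by
    intro N
    obtain ⟨n, ⟨x, hxK, hxn⟩, hnN⟩ :=
      (hfreq.and_eventually (eventually_gt_atTop ⌈2 * B * N / ε⌉₊)).exists
    have hn : (0 : ℝ) < n := by exact_mod_cast (Nat.zero_le _).trans_lt hnN
    have hBN : B * N < ε / 2 * n := by
      have := (div_lt_iff₀ hε).mp (Nat.lt_of_ceil_lt hnN)
      linarith
    have hmean : ε * n ≤ ∑ m ∈ Finset.Ioc 0 n, w (T^[m] x) := by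
      rw [dist_zero_left, Real.norm_of_nonneg
        (cesaroMean_nonneg (fun m => hw0 _ (hTK.iterate m hxK)) n), cesaroMean,
        le_inv_mul_iff₀ hn, mul_comm] at hxn
      rwa [← Finset.Icc_add_one_left_eq_Ioc, zero_add]
    obtain ⟨j, -, hj⟩ := exists_forall_le_sum_Ioc (le_max_right B₀ 0) (half_pos hε).le
      (hwB x hxK) (by linarith : ε / 2 * n + B * N < _)
    refine ⟨T^[j] x, hTK.iterate j hxK, fun t ht => (hj t ht).trans_eq ?_⟩
    simp only [sum_Ioc_eq_sum_Icc_add, Function.iterate_add_apply]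
  obtain ⟨y, hyK, hy⟩ := hK.exists_forall_le_of_forall_exists (fun t => continuousOn_finsetSum _
    fun m _ => hw.comp (hT.iterate hTK m) (hTK.iterate m)) hwindows
  have hlarge : ∀ᶠ t in atTop, ε / 2 ≤ cesaroMean (fun m => w (T^[m] y)) t := by
    filter_upwards [eventually_gt_atTop 0] with t ht
    rw [cesaroMean, le_inv_mul_iff₀ (by exact_mod_cast ht), mul_comm]
    exact hy t
  linarith [ge_of_tendsto (h y hyK) hlarge]

section DiscAlgebra

variable {φ : ℂ → ℂ}

theorem continuousOn_cesaro (hφc : ContinuousOn φ (closedBall 0 1))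
    (hφm : MapsTo φ (closedBall 0 1) (closedBall 0 1)) {f : ℂ → ℂ}
    (hf : ContinuousOn f (closedBall 0 1)) (n : ℕ) :
    ContinuousOn (cesaro φ f n) (closedBall 0 1) :=
  continuousOn_const.mul <| continuousOn_finsetSum _ fun m _ =>
    hf.comp (hφc.iterate hφm m) (hφm.iterate m)

theorem MeanErgodicDiscAlg.tendsto_cesaro (hME : MeanErgodicDiscAlg φ) {z₀ : ℂ}
    (hφc : ContinuousOn φ (closedBall 0 1)) (hφm : MapsTo φ (closedBall 0 1) (closedBall 0 1))
    (hz₀ : z₀ ∈ closedBall (0 : ℂ) 1)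
    (hφz₀ : ∀ z ∈ ball (0 : ℂ) 1, Tendsto (fun n => φ^[n] z) atTop (𝓝 z₀))
    {f : ℂ → ℂ} (hf : IsDiscAlg f) {z : ℂ} (hz : z ∈ closedBall (0 : ℂ) 1) :
    Tendsto (fun n => cesaro φ f n z) atTop (𝓝 (f z₀)) := by
  obtain ⟨g, hg⟩ := hME f hf
  have hgc : ContinuousOn g (closedBall 0 1) :=
    hg.continuousOn (Frequently.of_forall (continuousOn_cesaro hφc hφm hf.1))
  have hg_ball : EqOn g (fun _ => f z₀) (ball 0 1) := fun u hu => by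
    refine tendsto_nhds_unique (hg.tendsto_at (ball_subset_closedBall hu)) ?_
    refine Tendsto.cesaroMean ((hf.1 z₀ hz₀).tendsto.comp ?_)
    exact tendsto_nhdsWithin_iff.mpr ⟨hφz₀ u hu,
      Eventually.of_forall fun m => hφm.iterate m (ball_subset_closedBall hu)⟩
  have hgz : g z = f z₀ := hg_ball.of_subset_closure hgc continuousOn_const
    ball_subset_closedBall (closure_ball (0 : ℂ) one_ne_zero).ge hz
  exact hgz ▸ hg.tendsto_at hz

theorem meanErgodicDiscAlg_of_tendsto_cesaroMean {z₀ : ℂ}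
    (hφc : ContinuousOn φ (closedBall 0 1)) (hφm : MapsTo φ (closedBall 0 1) (closedBall 0 1))
    (hz₀ : ‖z₀‖ = 1)
    (h : ∀ z ∈ closedBall (0 : ℂ) 1, Tendsto (cesaroMean fun m => φ^[m] z) atTop (𝓝 z₀)) :
    MeanErgodicDiscAlg φ := by
  intro f hf
  refine ⟨fun _ => f z₀, ?_⟩
  have hgap := tendstoUniformlyOn_cesaroMean_of_tendsto_zero (isCompact_closedBall 0 1) hφm hφc
    (continuous_peakGap z₀).continuousOn
    (fun u hu => peakGap_nonneg hz₀ (mem_closedBall_zero_iff.mp hu))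
    (fun z hz => tendsto_cesaroMean_peakGap hz₀ (h z hz))
  rw [Metric.tendstoUniformlyOn_iff] at hgap ⊢
  intro ε hε
  obtain ⟨C, hC0, hC⟩ := exists_norm_sub_le_add_mul_peakGap hz₀ hf.1 (half_pos hε)
  filter_upwards [hgap (ε / 2 / (C + 1)) (by positivity), eventually_ne_atTop 0]
    with n hn hn0 z hz
  have hmean := norm_cesaroMean_sub_le hn0 fun m => hC _ (hφm.iterate m hz)
  have hgap_nonneg := cesaroMean_nonneg
    (fun m => peakGap_nonneg hz₀ (mem_closedBall_zero_iff.mp (hφm.iterate m hz))) n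
  have hgap_n := hn z hz
  rw [dist_zero_left, Real.norm_of_nonneg hgap_nonneg] at hgap_n
  rw [dist_comm, dist_eq_norm, cesaro_eq_cesaroMean]
  have : C * cesaroMean (fun m => peakGap z₀ (φ^[m] z)) n < ε / 2 := by
    calc _ ≤ (C + 1) * cesaroMean (fun m => peakGap z₀ (φ^[m] z)) n := by
          gcongr; linarith
      _ < (C + 1) * (ε / 2 / (C + 1)) := by gcongr
      _ = ε / 2 := by field_simp
  linarith

end DiscAlgebra

theorem stmt_11_general (φ : ℂ → ℂ) (hφa : IsDiscAlg φ)
    (hφm : MapsTo φ (closedBall (0:ℂ) 1) (closedBall (0:ℂ) 1))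
    (z₀ : ℂ) (hz₀ : ‖z₀‖ = 1)
    (hDW : TendstoLocallyUniformlyOn (fun (n : ℕ) (z : ℂ) => φ^[n] z) (fun _ => z₀)
      atTop (ball (0:ℂ) 1)) :
    (MeanErgodicDiscAlg φ ↔
      ∀ z : ℂ, ‖z‖ = 1 → ∀ U ∈ 𝓝 z₀, HasDensityOne {n : ℕ | φ^[n] z ∈ U}) ∧
    (MeanErgodicDiscAlg φ ↔
      ∀ z ∈ closedBall (0:ℂ) 1, ∀ j : ℕ, 0 < j →
        Tendsto (fun n : ℕ => (n : ℂ)⁻¹ * ∑ m ∈ Finset.Icc 1 n, (φ^[m] z) ^ j)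
          atTop (𝓝 (z₀ ^ j))) := by
  have hz₀D : z₀ ∈ closedBall (0 : ℂ) 1 := mem_closedBall_zero_iff.mpr hz₀.le
  have horbit : ∀ z ∈ closedBall (0 : ℂ) 1, ∀ m, ‖φ^[m] z‖ ≤ 1 := fun z hz m =>
    mem_closedBall_zero_iff.mp (hφm.iterate m hz)
  have hφz₀ : ∀ z ∈ ball (0 : ℂ) 1, Tendsto (fun n => φ^[n] z) atTop (𝓝 z₀) :=
    fun z hz => hDW.tendsto_at hz
  have hME_iff : MeanErgodicDiscAlg φ ↔
      ∀ z ∈ closedBall (0 : ℂ) 1, Tendsto (cesaroMean fun m => φ^[m] z) atTop (𝓝 z₀) :=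
    ⟨fun hME z hz => hME.tendsto_cesaro hφa.1 hφm hz₀D hφz₀
      ⟨continuousOn_id, differentiableOn_id⟩ hz,
    meanErgodicDiscAlg_of_tendsto_cesaroMean hφa.1 hφm hz₀⟩
  refine ⟨hME_iff.trans ⟨fun h z hz => ?_, fun h z hz => ?_⟩,
    fun hME z hz j _ => hME.tendsto_cesaro hφa.1 hφm hz₀D hφz₀
      ⟨(continuous_pow j).continuousOn, (differentiable_pow j).differentiableOn⟩ hz,
    fun h => hME_iff.mpr fun z hz => by
      have h1 := h z hz 1 one_pos
      simp only [pow_one] at h1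
      exact h1⟩
  · have hzD : z ∈ closedBall (0 : ℂ) 1 := mem_closedBall_zero_iff.mpr hz.le
    exact (tendsto_cesaroMean_iff_forall_hasDensityOne hz₀ (horbit z hzD)).mp (h z hzD)
  · rcases (mem_closedBall_zero_iff.mp hz).lt_or_eq with hlt | heq
    · exact (hφz₀ z (mem_ball_zero_iff.mpr hlt)).cesaroMean
    · exact (tendsto_cesaroMean_iff_forall_hasDensityOne hz₀ (horbit z hz)).mpr (h z heq)

/-- **Boundary Denjoy–Wolff point: characterization of mean ergodicity on `A(𝔻)`.** Let
`φ ∈ A(𝔻)` map `𝔻̄` into `𝔻̄` with Denjoy–Wolff point `z₀ ∈ ∂𝔻`. Then the following are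
equivalent: (i) `C_φ` is mean ergodic on `A(𝔻)`; (ii) for every `z ∈ ∂𝔻` and every
neighborhood `U` of `z₀`, the set `{n : φ^n(z) ∈ U}` has density `1`; (iii)
`(1/n) ∑_{m=1}^n (φ^m(z))^j → z₀^j` for every `z ∈ 𝔻̄` and every positive integer `j`. -/
theorem stmt_11 (φ : ℂ → ℂ) (hφa : IsDiscAlg φ)
    (hφm : MapsTo φ (closedBall (0:ℂ) 1) (closedBall (0:ℂ) 1))
    (hφb : MapsTo φ (ball (0:ℂ) 1) (ball (0:ℂ) 1))
    (z₀ : ℂ) (hz₀ : ‖z₀‖ = 1)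
    (hDW : TendstoLocallyUniformlyOn (fun (n : ℕ) (z : ℂ) => φ^[n] z) (fun _ => z₀)
      atTop (ball (0:ℂ) 1)) :
    (MeanErgodicDiscAlg φ ↔
      ∀ z : ℂ, ‖z‖ = 1 → ∀ U ∈ 𝓝 z₀, HasDensityOne {n : ℕ | φ^[n] z ∈ U}) ∧
    (MeanErgodicDiscAlg φ ↔
      ∀ z ∈ closedBall (0:ℂ) 1, ∀ j : ℕ, 0 < j →
        Tendsto (fun n : ℕ => (n : ℂ)⁻¹ * ∑ m ∈ Finset.Icc 1 n, (φ^[m] z) ^ j)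
          atTop (𝓝 (z₀ ^ j))) :=
  stmt_11_general φ hφa hφm z₀ hz₀ hDW
end
end

section
/- Let v be a typical weight on 𝔻 and let λ ∈ ℂ with |λ| = 1 be a root of unity, with k the smallest positive integer such that λ^k = 1. Consider the symbol φ(z) = λz. Then the composition operator C_φ is power bounded and uniformly mean ergodic on H_v^∞, and for every f ∈ H_v^∞ the Cesàro means (C_φ)_[n] f converge in ‖·‖_v to the function z ↦ (1/k) Σ_{m=0}^{k−1} f(λ^m z). -/
open Metric Set Filter Complex
open scoped Topology Classical

noncomputable section

/-! Since `λ ^ k = 1`, the orbit `m ↦ f (λ ^ m * z)` is a `k`-periodic sequence, and since `v` is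
radial, each of its terms is bounded by `‖f‖_v / v z`; this already gives power boundedness. For a
`k`-periodic sequence bounded by `C`, the partial sum up to `n` differs from `n / k` times the sum
over one period by at most `2 k C`, so the Cesàro means approach the average over one period at
rate `2 k ‖f‖_v / n`, uniformly on the unit ball of `H_v^∞`. -/

open Finset Function

namespace Function.Periodic

section AddCommGroup

variable {E : Type*} [AddCommGroup E] {a : ℕ → E} {k : ℕ}

theorem sum_range_shift_eq (ha : Periodic a k) (n : ℕ) :
    ∑ i ∈ range k, a (n + i) = ∑ i ∈ range k, a i := by
  induction n with
  | zero => simp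
  | succ n ih =>
    have h := (sum_range_succ' (fun i => a (n + i)) k).symm.trans
      (sum_range_succ (fun i => a (n + i)) k)
    rw [add_zero, ← ha n] at h
    simpa only [add_assoc, add_comm 1, add_left_inj, ih] using h

theorem sum_range_add_period (ha : Periodic a k) (n : ℕ) :
    ∑ i ∈ range (n + k), a i = ∑ i ∈ range n, a i + ∑ i ∈ range k, a i := by
  rw [sum_range_add, ha.sum_range_shift_eq]

end AddCommGroup

section Normed

variable {𝕜 E : Type*} [RCLike 𝕜] [NormedAddCommGroup E] [NormedSpace 𝕜 E] {a : ℕ → E} {k : ℕ}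
  {C : ℝ}

theorem norm_sum_range_sub_le (ha : Periodic a k) (hk : 0 < k) (hC : ∀ m, ‖a m‖ ≤ C) (n : ℕ) :
    ‖∑ i ∈ range n, a i - ((n : 𝕜) / k) • ∑ i ∈ range k, a i‖ ≤ 2 * k * C := by
  set D : ℕ → E := fun n => ∑ i ∈ range n, a i - ((n : 𝕜) / k) • ∑ i ∈ range k, a i
  have hk' : (k : 𝕜) ≠ 0 := by exact_mod_cast hk.ne'
  -- the deviation `D` is itself `k`-periodic, so it suffices to bound it on `[0, k)`
  have hD : Periodic D k := fun n => by
    simp only [D, ha.sum_range_add_period, Nat.cast_add, add_div, div_self hk', add_smul, one_smul]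
    abel
  have hsum : ∀ r, ‖∑ i ∈ range r, a i‖ ≤ r * C := fun r => by
    simpa using norm_sum_le_of_le (range r) fun i _ => hC i
  have hr : ((n % k : ℕ) : ℝ) ≤ k := by exact_mod_cast (Nat.mod_lt n hk).le
  change ‖D n‖ ≤ _
  rw [← hD.map_mod_nat]
  calc ‖D (n % k)‖
      ≤ ‖∑ i ∈ range (n % k), a i‖ + ‖((n % k : ℕ) : 𝕜) / k‖ * ‖∑ i ∈ range k, a i‖ :=
        (norm_sub_le _ _).trans_eq (by rw [norm_smul])
    _ ≤ (n % k : ℕ) * C + 1 * (k * C) := by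
        gcongr
        · exact hsum _
        · rw [norm_div, RCLike.norm_natCast, RCLike.norm_natCast]
          exact div_le_one_of_le₀ hr (Nat.cast_nonneg k)
        · exact hsum _
    _ ≤ 2 * k * C := by nlinarith [(norm_nonneg _).trans (hC 0)]

theorem norm_inv_smul_sum_Icc_sub_le (ha : Periodic a k) (hk : 0 < k) (hC : ∀ m, ‖a m‖ ≤ C)
    {n : ℕ} (hn : 0 < n) :
    ‖(n : 𝕜)⁻¹ • ∑ m ∈ Icc 1 n, a m - (k : 𝕜)⁻¹ • ∑ m ∈ range k, a m‖ ≤ 2 * k * C / n := by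
  have hshifted : Periodic (fun m => a (m + 1)) k := fun m => by
    simpa only [add_right_comm] using ha (m + 1)
  have hIcc : ∑ m ∈ Icc 1 n, a m = ∑ m ∈ range n, a (m + 1) := by
    rw [range_eq_Ico, sum_Ico_add', zero_add, Finset.Ico_add_one_right_eq_Icc]
  have hperiod : ∑ m ∈ range k, a (m + 1) = ∑ m ∈ range k, a m := by
    simpa only [add_comm 1] using ha.sum_range_shift_eq 1
  have hn' : (n : 𝕜) ≠ 0 := by exact_mod_cast hn.ne'
  have hfactor : (n : 𝕜)⁻¹ • ∑ m ∈ Icc 1 n, a m - (k : 𝕜)⁻¹ • ∑ m ∈ range k, a m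
      = (n : 𝕜)⁻¹ • (∑ m ∈ range n, a (m + 1) - ((n : 𝕜) / k) • ∑ m ∈ range k, a (m + 1)) := by
    rw [hIcc, hperiod, smul_sub, smul_smul, ← mul_div_assoc, inv_mul_cancel₀ hn', one_div]
  rw [hfactor, norm_smul, norm_inv, RCLike.norm_natCast, inv_mul_eq_div]
  gcongr
  exact hshifted.norm_sum_range_sub_le hk (fun m => hC _) n

end Normed

end Function.Periodic
section Rotation

variable {v : ℂ → ℝ} {f : ℂ → ℂ} {u z : ℂ} {M : ℝ}

theorem mul_mem_ball_one_of_norm_eq_one (hu : ‖u‖ = 1) (hz : z ∈ ball (0 : ℂ) 1) :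
    u * z ∈ ball (0 : ℂ) 1 := by
  simpa [norm_mul, hu] using hz

theorem IsTypicalWeight.apply_mul_of_norm_eq_one (hv : IsTypicalWeight v) (hu : ‖u‖ = 1)
    (hz : z ∈ ball (0 : ℂ) 1) : v (u * z) = v z :=
  hv.2.2.2.1 _ (mul_mem_ball_one_of_norm_eq_one hu hz) z hz (by rw [norm_mul, hu, one_mul])

theorem IsTypicalWeight.mul_norm_comp_mul_le (hv : IsTypicalWeight v) (hu : ‖u‖ = 1)
    (hM : ∀ z ∈ ball (0 : ℂ) 1, v z * ‖f z‖ ≤ M) (hz : z ∈ ball (0 : ℂ) 1) :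
    v z * ‖f (u * z)‖ ≤ M := by
  rw [← hv.apply_mul_of_norm_eq_one hu hz]
  exact hM _ (mul_mem_ball_one_of_norm_eq_one hu hz)

theorem IsTypicalWeight.mul_norm_cesaro_rotation_sub_le (hv : IsTypicalWeight v) {lam : ℂ}
    (hlam : ‖lam‖ = 1) {k : ℕ} (hk : 0 < k) (hroot : lam ^ k = 1)
    (hM : ∀ z ∈ ball (0 : ℂ) 1, v z * ‖f z‖ ≤ M) {n : ℕ} (hn : 0 < n)
    (hz : z ∈ ball (0 : ℂ) 1) :
    v z * ‖cesaro (fun w => lam * w) f n z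
      - (k : ℂ)⁻¹ * ∑ m ∈ range k, f (lam ^ m * z)‖ ≤ 2 * k * M / n := by
  have hvz : 0 < v z := hv.2.1 z hz
  have hperiodic : Periodic (fun m => f (lam ^ m * z)) k := fun m => by
    simp only [pow_add, hroot, mul_one]
  have hbound : ∀ m, ‖f (lam ^ m * z)‖ ≤ M / v z := fun m =>
    (le_div_iff₀' hvz).2 (hv.mul_norm_comp_mul_le (by rw [norm_pow, hlam, one_pow]) hM hz)
  have hcesaro := hperiodic.norm_inv_smul_sum_Icc_sub_le (𝕜 := ℂ) hk hbound hn
  calc v z * ‖cesaro (fun w => lam * w) f n z - (k : ℂ)⁻¹ * ∑ m ∈ range k, f (lam ^ m * z)‖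
      ≤ v z * (2 * k * (M / v z) / n) := by
        simpa only [cesaro, mul_left_iterate_apply, smul_eq_mul] using
          mul_le_mul_of_nonneg_left hcesaro hvz.le
    _ = 2 * k * M / n := by field_simp

end Rotation

theorem eventually_pos_and_div_le (C : ℝ) {ε : ℝ} (hε : 0 < ε) :
    ∀ᶠ n : ℕ in atTop, 0 < n ∧ C / n ≤ ε :=
  (eventually_gt_atTop 0).and
    ((tendsto_const_div_atTop_nhds_zero_nat C).eventually (ge_mem_nhds hε))

theorem stmt_17_general (v : ℂ → ℝ) (hv : IsTypicalWeight v)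
    (lam : ℂ) (hlam : ‖lam‖ = 1) (k : ℕ) (hk : 0 < k) (hroot : lam ^ k = 1) :
    -- power bounded
    (∃ M : ℝ, ∀ n : ℕ, ∀ f : ℂ → ℂ, IsHvInf v f →
      (∀ z ∈ ball (0:ℂ) 1, v z * ‖f z‖ ≤ 1) →
      ∀ z ∈ ball (0:ℂ) 1, v z * ‖f ((fun w => lam * w)^[n] z)‖ ≤ M) ∧
    -- uniformly mean ergodic with the stated limit
    (∀ ε > (0:ℝ), ∃ N : ℕ, ∀ n ≥ N, ∀ f : ℂ → ℂ, IsHvInf v f →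
      (∀ z ∈ ball (0:ℂ) 1, v z * ‖f z‖ ≤ 1) → ∀ z ∈ ball (0:ℂ) 1,
        v z * ‖cesaro (fun w => lam * w) f n z
          - (k : ℂ)⁻¹ * ∑ m ∈ Finset.range k, f (lam ^ m * z)‖ ≤ ε) ∧
    -- convergence of the Cesàro means in `‖·‖_v` for every `f ∈ H_v^∞`
    (∀ f : ℂ → ℂ, IsHvInf v f → ∀ ε > (0:ℝ), ∃ N : ℕ, ∀ n ≥ N, ∀ z ∈ ball (0:ℂ) 1,
      v z * ‖cesaro (fun w => lam * w) f n z
        - (k : ℂ)⁻¹ * ∑ m ∈ Finset.range k, f (lam ^ m * z)‖ ≤ ε) := by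
  refine ⟨⟨1, fun n f _ hf z hz => ?_⟩, fun ε hε => ?_, fun f hf ε hε => ?_⟩
  · rw [mul_left_iterate_apply]
    exact hv.mul_norm_comp_mul_le (by rw [norm_pow, hlam, one_pow]) hf hz
  · obtain ⟨N, hN⟩ := eventually_atTop.1 (eventually_pos_and_div_le (2 * k * 1) hε)
    exact ⟨N, fun n hn f _ hf z hz =>
      (hv.mul_norm_cesaro_rotation_sub_le hlam hk hroot hf (hN n hn).1 hz).trans (hN n hn).2⟩
  · obtain ⟨M, hM⟩ := hf.2
    obtain ⟨N, hN⟩ := eventually_atTop.1 (eventually_pos_and_div_le (2 * k * M) hε)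
    exact ⟨N, fun n hn z hz =>
      (hv.mul_norm_cesaro_rotation_sub_le hlam hk hroot hM (hN n hn).1 hz).trans (hN n hn).2⟩

/-- **Rotation symbol on `H_v^∞`, root-of-unity case.** Let `v` be a typical weight and
`λ` a root of unity with `|λ| = 1`, with minimal period `k`. Then for `φ(z) = λz` the
composition operator `C_φ` is power bounded and uniformly mean ergodic on `H_v^∞`, and for
every `f ∈ H_v^∞` its Cesàro means converge in `‖·‖_v` to `z ↦ (1/k) ∑_{m=0}^{k-1} f(λ^m z)`. -/
theorem stmt_17 (v : ℂ → ℝ) (hv : IsTypicalWeight v)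
    (lam : ℂ) (hlam : ‖lam‖ = 1) (k : ℕ) (hk : 0 < k) (hroot : lam ^ k = 1)
    (hmin : ∀ j : ℕ, 0 < j → j < k → lam ^ j ≠ 1) :
    -- power bounded
    (∃ M : ℝ, ∀ n : ℕ, ∀ f : ℂ → ℂ, IsHvInf v f →
      (∀ z ∈ ball (0:ℂ) 1, v z * ‖f z‖ ≤ 1) →
      ∀ z ∈ ball (0:ℂ) 1, v z * ‖f ((fun w => lam * w)^[n] z)‖ ≤ M) ∧
    -- uniformly mean ergodic with the stated limit
    (∀ ε > (0:ℝ), ∃ N : ℕ, ∀ n ≥ N, ∀ f : ℂ → ℂ, IsHvInf v f →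
      (∀ z ∈ ball (0:ℂ) 1, v z * ‖f z‖ ≤ 1) → ∀ z ∈ ball (0:ℂ) 1,
        v z * ‖cesaro (fun w => lam * w) f n z
          - (k : ℂ)⁻¹ * ∑ m ∈ Finset.range k, f (lam ^ m * z)‖ ≤ ε) ∧
    -- convergence of the Cesàro means in `‖·‖_v` for every `f ∈ H_v^∞`
    (∀ f : ℂ → ℂ, IsHvInf v f → ∀ ε > (0:ℝ), ∃ N : ℕ, ∀ n ≥ N, ∀ z ∈ ball (0:ℂ) 1,
      v z * ‖cesaro (fun w => lam * w) f n z
        - (k : ℂ)⁻¹ * ∑ m ∈ Finset.range k, f (lam ^ m * z)‖ ≤ ε) :=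
  stmt_17_general v hv lam hlam k hk hroot
end
end
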